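/- arXiv:2204.14128 — 3 statements merged into one kernel-verified Lean document; each statement's English description precedes it below -/
import Mathlib

section
/- Let I=[a,b]⊂ℝ be a closed nondegenerate interval and φ∈Φ_w(I). Then RBV_0^φ(I), equipped with the Luxemburg quasi-seminorm ‖f‖_{RBV^φ(I)} = inf{λ>0 : V^φ_I(f/λ)≤1}, is a quasi-Banach space: every Cauchy sequence in RBV_0^φ(I) converges in this quasi-norm to an element of RBV_0^φ(I). -/
open MeasureTheory Filter Set
open scoped ENNReal

noncomputable section

/-- A partition of the interval `[a, b]` into finitely many nondegenerate closed
subintervals with pairwise disjoint interiors, encoded by its endpoints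
`a = x 0 < x 1 < ⋯ < x n = b`. -/
structure IntervalPartition (a b : ℝ) where
  n : ℕ
  npos : 0 < n
  x : ℕ → ℝ
  left : x 0 = a
  right : x n = b
  strict : ∀ i < n, x i < x (i + 1)

/-- The mesh `|(I_k)|` of a partition: the maximal length of its subintervals. -/
def IntervalPartition.mesh {a b : ℝ} (P : IntervalPartition a b) : ℝ :=
  (Finset.range P.n).sup' (Finset.nonempty_range_iff.mpr P.npos.ne')
    fun k => P.x (k + 1) - P.x k

/-- `φ⁺_A(t) = sup_{x ∈ A} φ(x, t)`. -/
def phiSup {α : Type*} (φ : α → ℝ → ℝ≥0∞) (A : Set α) (t : ℝ) : ℝ≥0∞ :=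
  ⨆ x ∈ A, φ x t

/-- `φ⁻_A(t) = inf_{x ∈ A} φ(x, t)`. -/
def phiInf {α : Type*} (φ : α → ℝ → ℝ≥0∞) (A : Set α) (t : ℝ) : ℝ≥0∞ :=
  ⨅ x ∈ A, φ x t

/-- `Σ_k φ⁺_{I_k}(|Δ_k f| / |I_k|) · |I_k|` associated to a partition of `[a,b]`. -/
def vSum (φ : ℝ → ℝ → ℝ≥0∞) {a b : ℝ} (f : ℝ → ℝ) (P : IntervalPartition a b) : ℝ≥0∞ :=
  ∑ k ∈ Finset.range P.n,
    phiSup φ (Icc (P.x k) (P.x (k + 1)))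
        (|f (P.x (k + 1)) - f (P.x k)| / (P.x (k + 1) - P.x k)) *
      ENNReal.ofReal (P.x (k + 1) - P.x k)

/-- The same sum with `φ⁻` in place of `φ⁺`. -/
def vSumInf (φ : ℝ → ℝ → ℝ≥0∞) {a b : ℝ} (f : ℝ → ℝ) (P : IntervalPartition a b) : ℝ≥0∞ :=
  ∑ k ∈ Finset.range P.n,
    phiInf φ (Icc (P.x k) (P.x (k + 1)))
        (|f (P.x (k + 1)) - f (P.x k)| / (P.x (k + 1) - P.x k)) *
      ENNReal.ofReal (P.x (k + 1) - P.x k)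

/-- The Riesz φ-variation `V^φ_I(f)`: supremum over all partitions. -/
def rieszVar (φ : ℝ → ℝ → ℝ≥0∞) (a b : ℝ) (f : ℝ → ℝ) : ℝ≥0∞ :=
  ⨆ P : IntervalPartition a b, vSum φ f P

/-- The upper Riesz φ-variation `V̄^φ_I(f) = limsup_{|(I_k)|→0} Σ φ⁺_{I_k}(|Δ_k f|/|I_k|)|I_k|`. -/
def rieszVarUpper (φ : ℝ → ℝ → ℝ≥0∞) (a b : ℝ) (f : ℝ → ℝ) : ℝ≥0∞ :=
  ⨅ (δ : ℝ) (_ : 0 < δ), ⨆ (P : IntervalPartition a b) (_ : P.mesh < δ), vSum φ f P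

/-- The lower Riesz φ-variation `V̲^φ_I(f) = limsup_{|(I_k)|→0} Σ φ⁻_{I_k}(|Δ_k f|/|I_k|)|I_k|`. -/
def rieszVarLower (φ : ℝ → ℝ → ℝ≥0∞) (a b : ℝ) (f : ℝ → ℝ) : ℝ≥0∞ :=
  ⨅ (δ : ℝ) (_ : 0 < δ), ⨆ (P : IntervalPartition a b) (_ : P.mesh < δ), vSumInf φ f P

/-- Riesz φ-variation for `φ` independent of `x`. -/
def vSumC (φ : ℝ → ℝ≥0∞) {a b : ℝ} (f : ℝ → ℝ) (P : IntervalPartition a b) : ℝ≥0∞ :=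
  ∑ k ∈ Finset.range P.n,
    φ (|f (P.x (k + 1)) - f (P.x k)| / (P.x (k + 1) - P.x k)) *
      ENNReal.ofReal (P.x (k + 1) - P.x k)

def rieszVarC (φ : ℝ → ℝ≥0∞) (a b : ℝ) (f : ℝ → ℝ) : ℝ≥0∞ :=
  ⨆ P : IntervalPartition a b, vSumC φ f P

def rieszVarUpperC (φ : ℝ → ℝ≥0∞) (a b : ℝ) (f : ℝ → ℝ) : ℝ≥0∞ :=
  ⨅ (δ : ℝ) (_ : 0 < δ), ⨆ (P : IntervalPartition a b) (_ : P.mesh < δ), vSumC φ f P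

/-- A weak Φ-function on `I` (`φ ∈ Φ_w(I)`). -/
structure IsPhiW {α : Type*} [MeasurableSpace α] (φ : α → ℝ → ℝ≥0∞) (I : Set α) : Prop where
  meas : ∀ f : α → ℝ, Measurable f → Measurable fun x => φ x |f x|
  mono : ∀ x ∈ I, MonotoneOn (φ x) (Ici 0)
  map_zero : ∀ x ∈ I, φ x 0 = 0
  tendsto_zero : ∀ x ∈ I, Tendsto (φ x) (nhdsWithin 0 (Ioi 0)) (nhds 0)
  tendsto_top : ∀ x ∈ I, Tendsto (φ x) atTop (nhds ⊤)
  aInc1 : ∃ L : ℝ, 1 ≤ L ∧ ∀ x ∈ I, ∀ s t : ℝ, 0 < s → s ≤ t →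
    φ x s / ENNReal.ofReal s ≤ ENNReal.ofReal L * (φ x t / ENNReal.ofReal t)

/-- A convex Φ-function on `I` (`φ ∈ Φ_c(I)`): weak, convex and left-continuous in `t`. -/
structure IsPhiCx {α : Type*} [MeasurableSpace α] (φ : α → ℝ → ℝ≥0∞) (I : Set α) : Prop where
  toIsPhiW : IsPhiW φ I
  convex : ∀ x ∈ I, ∀ s t θ : ℝ, 0 ≤ s → 0 ≤ t → 0 ≤ θ → θ ≤ 1 →
    φ x (θ * s + (1 - θ) * t) ≤ ENNReal.ofReal θ * φ x s + ENNReal.ofReal (1 - θ) * φ x t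
  leftCont : ∀ x ∈ I, ∀ t : ℝ, 0 < t → Tendsto (φ x) (nhdsWithin t (Iio t)) (nhds (φ x t))

/-- An `x`-independent convex Φ-function (`φ ∈ Φ_c`). -/
structure IsPhiC (φ : ℝ → ℝ≥0∞) : Prop where
  mono : MonotoneOn φ (Ici 0)
  map_zero : φ 0 = 0
  tendsto_zero : Tendsto φ (nhdsWithin 0 (Ioi 0)) (nhds 0)
  tendsto_top : Tendsto φ atTop (nhds ⊤)
  convex : ∀ s t θ : ℝ, 0 ≤ s → 0 ≤ t → 0 ≤ θ → θ ≤ 1 →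
    φ (θ * s + (1 - θ) * t) ≤ ENNReal.ofReal θ * φ s + ENNReal.ofReal (1 - θ) * φ t
  leftCont : ∀ t : ℝ, 0 < t → Tendsto φ (nhdsWithin t (Iio t)) (nhds (φ t))

/-- `(aInc)_1` with a given constant `L`. -/
def AInc1Const (φ : ℝ → ℝ → ℝ≥0∞) (I : Set ℝ) (L : ℝ) : Prop :=
  1 ≤ L ∧ ∀ x ∈ I, ∀ s t : ℝ, 0 < s → s ≤ t →
    φ x s / ENNReal.ofReal s ≤ ENNReal.ofReal L * (φ x t / ENNReal.ofReal t)

/-- `(aInc)_p`: `t ↦ φ(x,t)/t^p` is almost increasing, uniformly in `x ∈ I`. -/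
def AIncP (φ : ℝ → ℝ → ℝ≥0∞) (I : Set ℝ) (p : ℝ) : Prop :=
  ∃ Lp : ℝ, 1 ≤ Lp ∧ ∀ x ∈ I, ∀ s t : ℝ, 0 < s → s ≤ t →
    φ x s / ENNReal.ofReal (s ^ p) ≤ ENNReal.ofReal Lp * (φ x t / ENNReal.ofReal (t ^ p))

/-- `(aDec)_q`: `t ↦ φ(x,t)/t^q` is almost decreasing, uniformly in `x ∈ I`. -/
def ADecQ (φ : ℝ → ℝ → ℝ≥0∞) (I : Set ℝ) (q : ℝ) : Prop :=
  ∃ Lq : ℝ, 1 ≤ Lq ∧ ∀ x ∈ I, ∀ s t : ℝ, 0 < s → s ≤ t →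
    φ x t / ENNReal.ofReal (t ^ q) ≤ ENNReal.ofReal Lq * (φ x s / ENNReal.ofReal (s ^ q))

/-- `(A0)`. -/
def A0 (φ : ℝ → ℝ → ℝ≥0∞) (I : Set ℝ) : Prop :=
  ∃ β : ℝ, 0 < β ∧ β ≤ 1 ∧ ∀ x ∈ I, φ x β ≤ 1 ∧ 1 ≤ φ x (1 / β)

/-- `(A1)`; in dimension one a ball of radius `r` has measure `2r`. -/
def A1 (φ : ℝ → ℝ → ℝ≥0∞) (I : Set ℝ) : Prop :=
  ∀ K : ℝ, 0 < K → ∃ β : ℝ, 0 < β ∧ β ≤ 1 ∧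
    ∀ z r : ℝ, 0 < r → ∀ x ∈ Metric.ball z r ∩ I, ∀ y ∈ Metric.ball z r ∩ I,
      ∀ t : ℝ, 0 ≤ t → φ y t ≤ ENNReal.ofReal (K / (2 * r)) →
        φ x (β * t) ≤ φ y t + 1

/-- A modulus of continuity: nonnegative with `ω(r) → 0` as `r → 0⁺`. -/
def IsModulus (ω : ℝ → ℝ) : Prop :=
  (∀ r, 0 ≤ ω r) ∧ Tendsto ω (nhdsWithin 0 (Ioi 0)) (nhds 0)

/-- `(VA1)`; in dimension one a ball of radius `r` has measure `2r`. -/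
def VA1 (φ : ℝ → ℝ → ℝ≥0∞) (I : Set ℝ) : Prop :=
  ∀ K : ℝ, 0 < K → ∃ ω : ℝ → ℝ, IsModulus ω ∧
    ∀ z r : ℝ, 0 < r → ∀ x ∈ Metric.ball z r ∩ I, ∀ y ∈ Metric.ball z r ∩ I,
      ∀ t : ℝ, 0 ≤ t → φ y t ≤ ENNReal.ofReal (K / (2 * r)) →
        φ x (t / (1 + ω r)) ≤ φ y t + ENNReal.ofReal (ω r)

/-- `φ'_∞(x) = lim_{t→∞} φ(x,t)/t`, realized as a supremum since the ratio is nondecreasing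
for convex `φ` with `φ(x,0) = 0`. -/
def phiInfty {α : Type*} (φ : α → ℝ → ℝ≥0∞) (x : α) : ℝ≥0∞ :=
  ⨆ (t : ℝ) (_ : 0 < t), φ x t / ENNReal.ofReal t

/-- Membership in `RBV^φ([a,b])`: `V^φ(λ f) → 0` as `λ → 0⁺`. -/
def MemRBV (φ : ℝ → ℝ → ℝ≥0∞) (a b : ℝ) (f : ℝ → ℝ) : Prop :=
  Tendsto (fun lam : ℝ => rieszVar φ a b fun x => lam * f x) (nhdsWithin 0 (Ioi 0)) (nhds 0)

/-- The Luxemburg quasi-seminorm `‖f‖_{RBV^φ([a,b])}`. -/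
def rbvNorm (φ : ℝ → ℝ → ℝ≥0∞) (a b : ℝ) (f : ℝ → ℝ) : ℝ :=
  sInf {lam : ℝ | 0 < lam ∧ rieszVar φ a b (fun x => f x / lam) ≤ 1}

/-- The Luxemburg quasi-seminorm associated to the upper Riesz variation. -/
def rbvNormUpper (φ : ℝ → ℝ → ℝ≥0∞) (a b : ℝ) (f : ℝ → ℝ) : ℝ :=
  sInf {lam : ℝ | 0 < lam ∧ rieszVarUpper φ a b (fun x => f x / lam) ≤ 1}

/-- Membership in the generalized Orlicz space `L^φ([a,b])`. -/
def MemLphi (φ : ℝ → ℝ → ℝ≥0∞) (a b : ℝ) (g : ℝ → ℝ) : Prop :=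
  Measurable g ∧
    Tendsto (fun lam : ℝ => ∫⁻ x in Icc a b, φ x (lam * |g x|))
      (nhdsWithin 0 (Ioi 0)) (nhds 0)

/-- The Luxemburg quasi-norm on `L^φ([a,b])`. -/
def lphiNorm (φ : ℝ → ℝ → ℝ≥0∞) (a b : ℝ) (g : ℝ → ℝ) : ℝ :=
  sInf {lam : ℝ | 0 < lam ∧ (∫⁻ x in Icc a b, φ x (|g x| / lam)) ≤ 1}

/-- Absolute continuity of `f` on `[a, b]`. -/
def AbsContOn (f : ℝ → ℝ) (a b : ℝ) : Prop :=
  ∀ ε : ℝ, 0 < ε → ∃ δ : ℝ, 0 < δ ∧ ∀ (m : ℕ) (s t : ℕ → ℝ),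
    (∀ i < m, a ≤ s i ∧ s i ≤ t i ∧ t i ≤ b) →
    (∀ i j, i < j → j < m → t i ≤ s j ∨ t j ≤ s i) →
    (∑ i ∈ Finset.range m, (t i - s i)) < δ →
    (∑ i ∈ Finset.range m, |f (t i) - f (s i)|) < ε

/-- Left-continuity of `f` at every point of `(a, b]`. -/
def LeftContOn (f : ℝ → ℝ) (a b : ℝ) : Prop :=
  ∀ x ∈ Ioc a b, Tendsto f (nhdsWithin x (Iio x)) (nhds (f x))

/-- `μ` is the distributional derivative measure of the left-continuous function `f` of
bounded variation on `[a,b]`: `f(x) = f(a) + Df([a, x))`. -/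
def IsDerivMeasure (f : ℝ → ℝ) (a b : ℝ) (μ : SignedMeasure ℝ) : Prop :=
  ∀ x ∈ Icc a b, f x = f a + μ (Ico a x)

end

section Aux

variable {a b : ℝ} {φ : ℝ → ℝ → ℝ≥0∞}

lemma IntervalPartition.x_le (P : IntervalPartition a b) {i j : ℕ}
    (hij : i ≤ j) (hj : j ≤ P.n) : P.x i ≤ P.x j := by
  induction j with
  | zero => obtain rfl := Nat.le_zero.mp hij; exact le_rfl
  | succ m ih =>
    rcases Nat.lt_or_ge i (m + 1) with h | h
    · exact (ih (Nat.lt_succ_iff.mp h) (le_trans m.le_succ hj)).trans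
        (P.strict m (Nat.lt_of_succ_le hj)).le
    · obtain rfl : i = m + 1 := le_antisymm hij h
      exact le_rfl

lemma IntervalPartition.x_mem (P : IntervalPartition a b) {k : ℕ} (hk : k ≤ P.n) :
    P.x k ∈ Icc a b := by
  constructor
  · calc a = P.x 0 := P.left.symm
      _ ≤ P.x k := P.x_le (Nat.zero_le k) hk
  · calc P.x k ≤ P.x P.n := P.x_le hk le_rfl
      _ = b := P.right

lemma IntervalPartition.subIcc (P : IntervalPartition a b) {k : ℕ} (hk : k < P.n) :
    Icc (P.x k) (P.x (k + 1)) ⊆ Icc a b := by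
  intro y hy
  exact ⟨(P.x_mem hk.le).1.trans hy.1, hy.2.trans (P.x_mem (Nat.succ_le_of_lt hk)).2⟩

lemma phiSup_mono (hφ : IsPhiW φ (Icc a b)) {A : Set ℝ} (hA : A ⊆ Icc a b)
    {s t : ℝ} (hs : 0 ≤ s) (hst : s ≤ t) : phiSup φ A s ≤ phiSup φ A t := by
  refine iSup_mono fun x => iSup_mono fun hx => ?_
  exact hφ.mono x (hA hx) hs (hs.trans hst) hst

lemma phiSup_zero (hφ : IsPhiW φ (Icc a b)) {A : Set ℝ} (hA : A ⊆ Icc a b) :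
    phiSup φ A 0 = 0 :=
  le_antisymm (iSup₂_le fun x hx => by rw [hφ.map_zero x (hA hx)]) (zero_le)

lemma vSum_le_vSum (hφ : IsPhiW φ (Icc a b)) (P : IntervalPartition a b) {f h : ℝ → ℝ}
    (H : ∀ k < P.n, |f (P.x (k + 1)) - f (P.x k)| ≤ |h (P.x (k + 1)) - h (P.x k)|) :
    vSum φ f P ≤ vSum φ h P := by
  refine Finset.sum_le_sum fun k hk => ?_
  have hk' := Finset.mem_range.mp hk
  have hlen : 0 < P.x (k + 1) - P.x k := sub_pos.mpr (P.strict k hk')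
  refine mul_le_mul_left (phiSup_mono hφ (P.subIcc hk')
    (div_nonneg (abs_nonneg _) hlen.le) ((div_le_div_iff_of_pos_right hlen).mpr (H k hk'))) _

lemma rieszVar_mono (hφ : IsPhiW φ (Icc a b)) {f h : ℝ → ℝ}
    (H : ∀ x y : ℝ, |f y - f x| ≤ |h y - h x|) :
    rieszVar φ a b f ≤ rieszVar φ a b h :=
  iSup_mono fun P => vSum_le_vSum hφ P fun k _ => H _ _

lemma phi_le_of_aInc {x s t L : ℝ} (hL0 : 0 ≤ L)
    (hLst : φ x s / ENNReal.ofReal s ≤ ENNReal.ofReal L * (φ x t / ENNReal.ofReal t))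
    (hs : 0 < s) (hst : s ≤ t) :
    φ x s ≤ ENNReal.ofReal (L * (s / t)) * φ x t := by
  have ht : 0 < t := hs.trans_le hst
  calc φ x s = φ x s / ENNReal.ofReal s * ENNReal.ofReal s :=
        (ENNReal.div_mul_cancel (ENNReal.ofReal_pos.mpr hs).ne' ENNReal.ofReal_ne_top).symm
    _ ≤ ENNReal.ofReal L * (φ x t / ENNReal.ofReal t) * ENNReal.ofReal s :=
        mul_le_mul_left hLst _
    _ = ENNReal.ofReal (L * (s / t)) * φ x t := by
        rw [ENNReal.ofReal_mul hL0, ENNReal.ofReal_div_of_pos ht, div_eq_mul_inv,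
          div_eq_mul_inv]
        ring

lemma rieszVar_smul_le (hφ : IsPhiW φ (Icc a b)) {L : ℝ} (hL1 : 1 ≤ L)
    (hL : ∀ x ∈ Icc a b, ∀ s t : ℝ, 0 < s → s ≤ t →
      φ x s / ENNReal.ofReal s ≤ ENNReal.ofReal L * (φ x t / ENNReal.ofReal t))
    {c μ : ℝ} (hc : 0 < c) (hcμ : c ≤ μ) (f : ℝ → ℝ) :
    rieszVar φ a b (fun x => c * f x) ≤
      ENNReal.ofReal (L * (c / μ)) * rieszVar φ a b (fun x => μ * f x) := by
  have hμ : 0 < μ := hc.trans_le hcμ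
  have hL0 : 0 ≤ L := zero_le_one.trans hL1
  refine iSup_le fun P => le_trans ?_ (mul_le_mul_right (le_iSup _ P) _)
  rw [vSum, vSum, Finset.mul_sum]
  refine Finset.sum_le_sum fun k hk => ?_
  have hk' := Finset.mem_range.mp hk
  have hlen : 0 < P.x (k + 1) - P.x k := sub_pos.mpr (P.strict k hk')
  have habsc : |c * f (P.x (k + 1)) - c * f (P.x k)| = c * |f (P.x (k + 1)) - f (P.x k)| := by
    rw [← mul_sub, abs_mul, abs_of_pos hc]
  have habsμ : |μ * f (P.x (k + 1)) - μ * f (P.x k)| = μ * |f (P.x (k + 1)) - f (P.x k)| := by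
    rw [← mul_sub, abs_mul, abs_of_pos hμ]
  rw [habsc, habsμ]
  set d := |f (P.x (k + 1)) - f (P.x k)| with hd
  rcases eq_or_lt_of_le (abs_nonneg (f (P.x (k + 1)) - f (P.x k))) with h0 | h0
  · rw [← hd] at h0
    rw [← h0, mul_zero, zero_div, phiSup_zero hφ (P.subIcc hk'), zero_mul]
    exact zero_le
  · rw [← hd] at h0
    set len := P.x (k + 1) - P.x k
    have hs : 0 < c * d / len := by positivity
    have hst : c * d / len ≤ μ * d / len := by gcongr
    rw [← mul_assoc]
    refine mul_le_mul_left ?_ _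
    refine iSup₂_le fun y hy => ?_
    have key := phi_le_of_aInc (φ := φ) hL0 (hL y (P.subIcc hk' hy) _ _ hs hst) hs hst
    have hratio : c * d / len / (μ * d / len) = c / μ := by
      field_simp
    rw [hratio] at key
    exact key.trans (mul_le_mul_right
      (le_iSup₂ (f := fun z (_ : z ∈ Icc (P.x k) (P.x (k + 1))) => φ z (μ * d / len)) y hy) _)

lemma memRBV_of_bounded (hφ : IsPhiW φ (Icc a b)) {μ : ℝ} (hμ : 0 < μ) {f : ℝ → ℝ}
    (hV : rieszVar φ a b (fun x => μ * f x) ≤ 1) : MemRBV φ a b f := by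
  obtain ⟨L, hL1, hL⟩ := hφ.aInc1
  have hVne : rieszVar φ a b (fun x => μ * f x) ≠ ⊤ := (hV.trans_lt ENNReal.one_lt_top).ne
  rw [MemRBV]
  have hupper : Tendsto (fun lam : ℝ => ENNReal.ofReal (L * (lam / μ)) *
      rieszVar φ a b (fun x => μ * f x)) (nhdsWithin 0 (Ioi 0)) (nhds 0) := by
    have h1 : Tendsto (fun lam : ℝ => L * (lam / μ)) (nhdsWithin 0 (Ioi 0)) (nhds 0) := by
      have hcont : Continuous fun lam : ℝ => L * (lam / μ) := by continuity
      have := hcont.tendsto 0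
      simp only [zero_div, mul_zero] at this
      exact this.mono_left nhdsWithin_le_nhds
    have h3 := ENNReal.Tendsto.mul_const (ENNReal.tendsto_ofReal h1) (Or.inr hVne)
    simpa using h3
  refine tendsto_of_tendsto_of_tendsto_of_le_of_le' tendsto_const_nhds hupper
    (Eventually.of_forall fun _ => zero_le) ?_
  filter_upwards [self_mem_nhdsWithin,
    (eventually_lt_nhds hμ).filter_mono nhdsWithin_le_nhds] with lam hlam1 hlam2
  exact (rieszVar_smul_le hφ hL1 hL hlam1 hlam2.le f)

lemma vSum_add_le (hφ : IsPhiW φ (Icc a b)) (P : IntervalPartition a b) (f h : ℝ → ℝ) :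
    vSum φ (fun x => f x + h x) P ≤ vSum φ (fun x => 2 * f x) P + vSum φ (fun x => 2 * h x) P := by
  rw [vSum, vSum, vSum, ← Finset.sum_add_distrib]
  refine Finset.sum_le_sum fun k hk => ?_
  have hk' := Finset.mem_range.mp hk
  have hlen : 0 < P.x (k + 1) - P.x k := sub_pos.mpr (P.strict k hk')
  have h2f : |2 * f (P.x (k + 1)) - 2 * f (P.x k)| = 2 * |f (P.x (k + 1)) - f (P.x k)| := by
    rw [← mul_sub, abs_mul]; norm_num
  have h2h : |2 * h (P.x (k + 1)) - 2 * h (P.x k)| = 2 * |h (P.x (k + 1)) - h (P.x k)| := by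
    rw [← mul_sub, abs_mul]; norm_num
  rw [h2f, h2h, ← add_mul]
  refine mul_le_mul_left ?_ _
  set df := |f (P.x (k + 1)) - f (P.x k)|
  set dh := |h (P.x (k + 1)) - h (P.x k)|
  have harg : |(f (P.x (k + 1)) + h (P.x (k + 1))) - (f (P.x k) + h (P.x k))| ≤
      max (2 * df) (2 * dh) := by
    have h1 : |(f (P.x (k + 1)) + h (P.x (k + 1))) - (f (P.x k) + h (P.x k))| ≤ df + dh := by
      calc |(f (P.x (k + 1)) + h (P.x (k + 1))) - (f (P.x k) + h (P.x k))|
          = |(f (P.x (k + 1)) - f (P.x k)) + (h (P.x (k + 1)) - h (P.x k))| := by ring_nf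
        _ ≤ df + dh := abs_add_le _ _
    rcases le_total df dh with hle | hle
    · exact h1.trans (le_trans (by linarith) (le_max_right _ _))
    · exact h1.trans (le_trans (by linarith) (le_max_left _ _))
  refine le_trans (phiSup_mono hφ (P.subIcc hk') (div_nonneg (abs_nonneg _) hlen.le)
    ((div_le_div_iff_of_pos_right hlen).mpr harg)) ?_
  rcases max_cases (2 * df) (2 * dh) with ⟨hmax, _⟩ | ⟨hmax, _⟩
  · rw [hmax]; exact le_self_add
  · rw [hmax]; exact le_add_self

lemma memRBV_add (hφ : IsPhiW φ (Icc a b)) {f h : ℝ → ℝ}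
    (hf : MemRBV φ a b f) (hh : MemRBV φ a b h) : MemRBV φ a b (fun x => f x + h x) := by
  have key : ∀ lam : ℝ, rieszVar φ a b (fun x => lam * (f x + h x)) ≤
      rieszVar φ a b (fun x => 2 * lam * f x) + rieszVar φ a b (fun x => 2 * lam * h x) := by
    intro lam
    refine iSup_le fun P => ?_
    have h1 : (fun x => lam * (f x + h x)) = fun x => (lam * f x) + (lam * h x) := by
      funext x; ring
    rw [h1]
    refine le_trans (vSum_add_le hφ P _ _) ?_
    have h2 : (fun x => 2 * (lam * f x)) = fun x => 2 * lam * f x := by funext x; ring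
    have h3 : (fun x => 2 * (lam * h x)) = fun x => 2 * lam * h x := by funext x; ring
    rw [h2, h3]
    exact add_le_add (le_iSup _ P) (le_iSup _ P)
  have hmap : Tendsto (fun lam : ℝ => 2 * lam) (nhdsWithin 0 (Ioi 0)) (nhdsWithin 0 (Ioi 0)) := by
    rw [tendsto_nhdsWithin_iff]
    constructor
    · have hcont : Continuous fun lam : ℝ => 2 * lam := by continuity
      have := hcont.tendsto 0
      simp only [mul_zero] at this
      exact this.mono_left nhdsWithin_le_nhds
    · filter_upwards [self_mem_nhdsWithin] with lam hlam
      exact mem_Ioi.mpr (mul_pos two_pos (mem_Ioi.mp hlam))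
  have hupper : Tendsto (fun lam : ℝ => rieszVar φ a b (fun x => 2 * lam * f x) +
      rieszVar φ a b (fun x => 2 * lam * h x)) (nhdsWithin 0 (Ioi 0)) (nhds 0) := by
    have := (hf.comp hmap).add (hh.comp hmap)
    simpa using this
  exact tendsto_of_tendsto_of_tendsto_of_le_of_le tendsto_const_nhds hupper
    (fun _ => zero_le) key

lemma memRBV_of_abs (hφ : IsPhiW φ (Icc a b)) {f h : ℝ → ℝ}
    (H : ∀ x y : ℝ, |f y - f x| ≤ |h y - h x|) (hh : MemRBV φ a b h) : MemRBV φ a b f := by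
  have key : ∀ lam : ℝ, 0 ≤ lam → rieszVar φ a b (fun x => lam * f x) ≤
      rieszVar φ a b (fun x => lam * h x) := by
    intro lam hlam
    refine rieszVar_mono hφ fun x y => ?_
    rw [← mul_sub, ← mul_sub, abs_mul, abs_mul]
    exact mul_le_mul_of_nonneg_left (H x y) (abs_nonneg _)
  refine tendsto_of_tendsto_of_tendsto_of_le_of_le' tendsto_const_nhds hh
    (Eventually.of_forall fun _ => zero_le) ?_
  filter_upwards [self_mem_nhdsWithin] with lam hlam
  exact key lam (le_of_lt hlam)

end Aux

section Aux2

variable {a b : ℝ} {φ : ℝ → ℝ → ℝ≥0∞}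

def part1 (a b : ℝ) (h : a < b) : IntervalPartition a b where
  n := 1
  npos := one_pos
  x := fun k => if k = 0 then a else b
  left := by simp
  right := by simp
  strict := by
    intro i hi
    interval_cases i
    simpa using h

def part2 (a b c : ℝ) (h1 : a < c) (h2 : c < b) : IntervalPartition a b where
  n := 2
  npos := two_pos
  x := fun k => if k = 0 then a else if k = 1 then c else b
  left := by simp
  right := by simp
  strict := by
    intro i hi
    interval_cases i <;> simp [h1, h2]

lemma first_le_rieszVar {f : ℝ → ℝ} (hab : a < b) {c : ℝ} (hc : c ∈ Ioc a b) :
    phiSup φ (Icc a c) (|f c - f a| / (c - a)) * ENNReal.ofReal (c - a) ≤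
      rieszVar φ a b f := by
  rcases eq_or_lt_of_le hc.2 with rfl | hcb
  · refine le_trans ?_ (le_iSup (vSum φ f) (part1 a c hc.1))
    rw [vSum]
    simp [part1]
  · refine le_trans ?_ (le_iSup (vSum φ f) (part2 a b c hc.1 hcb))
    rw [vSum]
    rw [show (part2 a b c hc.1 hcb).n = 2 from rfl]
    rw [Finset.sum_range_succ, Finset.sum_range_one]
    refine le_trans ?_ le_self_add
    apply le_of_eq
    simp [part2]

lemma abs_lt_of_rieszVar_le_one (hφ : IsPhiW φ (Icc a b)) (hab : a < b) {f : ℝ → ℝ}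
    (hfa : f a = 0) (hV : rieszVar φ a b f ≤ 1) {c T : ℝ} (hc : c ∈ Ioc a b)
    (hT : ∀ t : ℝ, T ≤ t → (ENNReal.ofReal (c - a))⁻¹ < φ a t) :
    |f c| < T * (c - a) := by
  have hca : 0 < c - a := sub_pos.mpr hc.1
  have h1 : phiSup φ (Icc a c) (|f c - f a| / (c - a)) * ENNReal.ofReal (c - a) ≤ 1 :=
    (first_le_rieszVar hab hc).trans hV
  rw [hfa, sub_zero] at h1
  have h2 : φ a (|f c| / (c - a)) ≤ (ENNReal.ofReal (c - a))⁻¹ := by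
    have h3 : φ a (|f c| / (c - a)) ≤ phiSup φ (Icc a c) (|f c| / (c - a)) :=
      le_iSup₂ (f := fun x (_ : x ∈ Icc a c) => φ x (|f c| / (c - a))) a ⟨le_rfl, hc.1.le⟩
    exact h3.trans (ENNReal.le_inv_iff_mul_le.mpr h1)
  by_contra hcon
  push_neg at hcon
  have h4 : T ≤ |f c| / (c - a) := (le_div_iff₀ hca).mpr hcon
  exact absurd h2 (not_le.mpr (hT _ h4))

lemma rieszVar_limit_le (hφ : IsPhiW φ (Icc a b)) {G : ℕ → ℝ → ℝ} {g : ℝ → ℝ}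
    (hconv : ∀ x ∈ Icc a b, Tendsto (fun j => G j x) atTop (nhds (g x)))
    {lam lam' : ℝ} (h0 : 0 < lam) (hll : lam < lam')
    (hV : ∀ᶠ j in atTop, rieszVar φ a b (fun x => G j x / lam) ≤ 1) :
    rieszVar φ a b (fun x => g x / lam') ≤ 1 := by
  have hlam' : 0 < lam' := h0.trans hll
  refine iSup_le fun P => ?_
  have hev : ∀ᶠ j in atTop, ∀ k ∈ Finset.range P.n,
      |g (P.x (k + 1)) - g (P.x k)| / lam' ≤ |G j (P.x (k + 1)) - G j (P.x k)| / lam := by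
    rw [Filter.eventually_all_finset]
    intro k hk
    have hk' := Finset.mem_range.mp hk
    have ht : Tendsto (fun j => |G j (P.x (k + 1)) - G j (P.x k)| / lam) atTop
        (nhds (|g (P.x (k + 1)) - g (P.x k)| / lam)) :=
      (((hconv _ (P.x_mem (Nat.succ_le_of_lt hk'))).sub (hconv _ (P.x_mem hk'.le))).abs).div_const lam
    rcases eq_or_lt_of_le (abs_nonneg (g (P.x (k + 1)) - g (P.x k))) with h0' | h0'
    · refine Eventually.of_forall fun j => ?_
      rw [← h0', zero_div]
      positivity
    · have hlt : |g (P.x (k + 1)) - g (P.x k)| / lam' < |g (P.x (k + 1)) - g (P.x k)| / lam :=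
        div_lt_div_of_pos_left h0' h0 hll
      exact (ht.eventually (lt_mem_nhds hlt)).mono fun _ h => h.le
  obtain ⟨j, hj1, hj2⟩ := (hev.and hV).exists
  refine le_trans (vSum_le_vSum hφ P fun k hk => ?_) ((le_iSup _ P).trans hj2)
  have h5 := hj1 k (Finset.mem_range.mpr hk)
  rw [div_sub_div_same, div_sub_div_same, abs_div, abs_div, abs_of_pos h0, abs_of_pos hlam']
  exact h5

end Aux2

/-- Theorem 4.4.  `RBV_0^φ(I)` is a quasi-Banach space: every Cauchy sequence (with respect
to the Luxemburg quasi-seminorm of differences) converges in `RBV_0^φ(I)`. -/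
theorem rbv_zero_complete (a b : ℝ) (hab : a < b)
    (φ : ℝ → ℝ → ℝ≥0∞) (hφ : IsPhiW φ (Set.Icc a b)) :
    ∀ F : ℕ → ℝ → ℝ,
      (∀ i : ℕ, MemRBV φ a b (F i) ∧ F i a = 0) →
      (∀ ε : ℝ, 0 < ε → ∃ N : ℕ, ∀ i ≥ N, ∀ j ≥ N,
        rbvNorm φ a b (fun x => F i x - F j x) < ε) →
      ∃ g : ℝ → ℝ, MemRBV φ a b g ∧ g a = 0 ∧
        Tendsto (fun i : ℕ => rbvNorm φ a b fun x => F i x - g x) atTop (nhds 0) := by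
  classical
  intro F hF hCau
  have haI : a ∈ Icc a b := ⟨le_rfl, hab.le⟩
  -- differences belong to RBV
  have hdiffRBV : ∀ i j : ℕ, MemRBV φ a b (fun x => F i x - F j x) := by
    intro i j
    have hneg : MemRBV φ a b (fun x => -(F j x)) := by
      refine memRBV_of_abs hφ (fun x y => ?_) (hF j).1
      rw [neg_sub_neg, abs_sub_comm]
    have := memRBV_add hφ (hF i).1 hneg
    simpa [sub_eq_add_neg] using this
  -- the Luxemburg sets of the differences are nonempty
  have hsetne : ∀ i j : ℕ, {lam : ℝ | 0 < lam ∧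
      rieszVar φ a b (fun x => (F i x - F j x) / lam) ≤ 1}.Nonempty := by
    intro i j
    have h1 := hdiffRBV i j
    rw [MemRBV] at h1
    have h2 : ∀ᶠ μ in nhdsWithin (0:ℝ) (Ioi 0),
        rieszVar φ a b (fun x => μ * (F i x - F j x)) ≤ 1 :=
      h1.eventually (eventually_le_nhds zero_lt_one)
    obtain ⟨μ, hμle, hμmem⟩ := (h2.and self_mem_nhdsWithin).exists
    refine ⟨1 / μ, by positivity, ?_⟩
    have heq : (fun x => (F i x - F j x) / (1 / μ)) = fun x => μ * (F i x - F j x) := by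
      funext x; rw [one_div, div_inv_eq_mul, mul_comm]
    rw [heq]
    exact hμle
  -- uniform smallness of the variation of differences
  have key : ∀ ε : ℝ, 0 < ε → ∃ N : ℕ, ∀ i ≥ N, ∀ j ≥ N,
      rieszVar φ a b (fun x => (F i x - F j x) / ε) ≤ 1 := by
    intro ε hε
    obtain ⟨N, hN⟩ := hCau ε hε
    refine ⟨N, fun i hi j hj => ?_⟩
    have hN' := hN i hi j hj
    rw [rbvNorm] at hN'
    obtain ⟨lam, ⟨hlam0, hlamV⟩, hlamε⟩ := exists_lt_of_csInf_lt (hsetne i j) hN'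
    refine le_trans (rieszVar_mono hφ fun x y => ?_) hlamV
    rw [div_sub_div_same, div_sub_div_same, abs_div, abs_div, abs_of_pos hε, abs_of_pos hlam0]
    gcongr
  -- pointwise Cauchy
  have hCS : ∀ x ∈ Icc a b, CauchySeq fun i => F i x := by
    intro x hx
    rcases eq_or_lt_of_le hx.1 with heq | hax
    · have hconst : (fun i => F i x) = fun _ => (0:ℝ) :=
        funext fun i => heq ▸ (hF i).2
      rw [hconst]
      exact cauchySeq_const 0
    · have hca : 0 < x - a := sub_pos.mpr hax
      have hCne : (ENNReal.ofReal (x - a))⁻¹ ≠ ⊤ := by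
        simp [ENNReal.ofReal_pos.mpr hca, (ENNReal.ofReal_pos.mpr hca).ne']
      obtain ⟨T, hT⟩ : ∃ T : ℝ, ∀ t ≥ T, (ENNReal.ofReal (x - a))⁻¹ < φ a t :=
        eventually_atTop.mp
          ((hφ.tendsto_top a haI).eventually (lt_mem_nhds (lt_top_iff_ne_top.mpr hCne)))
      rw [Metric.cauchySeq_iff]
      intro ε hε
      set T' := max T 1 with hT'
      have hT'pos : (0:ℝ) < T' := lt_of_lt_of_le one_pos (le_max_right _ _)
      set δ := ε / (T' * (x - a)) with hδdef
      have hδ : 0 < δ := div_pos hε (mul_pos hT'pos hca)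
      obtain ⟨N, hN⟩ := key δ hδ
      refine ⟨N, fun i hi j hj => ?_⟩
      have hfa : (fun y => (F i y - F j y) / δ) a = 0 := by
        simp [(hF i).2, (hF j).2]
      have hb := abs_lt_of_rieszVar_le_one hφ hab hfa (hN i hi j hj) (T := T') ⟨hax, hx.2⟩
        (fun t ht => hT t (le_trans (le_max_left T 1) ht))
      have h2 : |F i x - F j x| / δ < T' * (x - a) := by
        have habs : |(F i x - F j x) / δ| = |F i x - F j x| / δ := by
          rw [abs_div, abs_of_pos hδ]
        rwa [habs] at hb
      rw [Real.dist_eq]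
      calc |F i x - F j x| = |F i x - F j x| / δ * δ := by field_simp
        _ < T' * (x - a) * δ := by
            exact mul_lt_mul_of_pos_right h2 hδ
        _ = ε := by
            rw [hδdef]
            field_simp
  -- the pointwise limit
  set g : ℝ → ℝ := fun x => if hx : x ∈ Icc a b then limUnder atTop (fun i => F i x) else 0
    with hg
  have hglim : ∀ x ∈ Icc a b, Tendsto (fun i => F i x) atTop (nhds (g x)) := by
    intro x hx
    rw [hg]
    simp only [dif_pos hx]
    exact (hCS x hx).tendsto_limUnder
  have hga : g a = 0 := by
    have h1 := hglim a haI
    have h2 : Tendsto (fun i : ℕ => F i a) atTop (nhds 0) := by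
      have hconst : (fun i : ℕ => F i a) = fun _ => (0:ℝ) := funext fun i => (hF i).2
      rw [hconst]
      exact tendsto_const_nhds
    exact tendsto_nhds_unique h1 h2
  -- the convergence bound
  have hconv : ∀ ε : ℝ, 0 < ε → ∃ N : ℕ, ∀ i ≥ N,
      rieszVar φ a b (fun x => (F i x - g x) / ε) ≤ 1 := by
    intro ε hε
    obtain ⟨N, hN⟩ := key (ε / 2) (half_pos hε)
    refine ⟨N, fun i hi => ?_⟩
    refine rieszVar_limit_le hφ (G := fun j x => F i x - F j x) (g := fun x => F i x - g x)
      (fun x hx => tendsto_const_nhds.sub (hglim x hx)) (half_pos hε) (by linarith) ?_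
    exact eventually_atTop.mpr ⟨N, fun j hj => hN i hi j hj⟩
  have hnorm_le : ∀ ε : ℝ, 0 < ε → ∃ N : ℕ, ∀ i ≥ N,
      rbvNorm φ a b (fun x => F i x - g x) ≤ ε := by
    intro ε hε
    obtain ⟨N, hN⟩ := hconv ε hε
    refine ⟨N, fun i hi => ?_⟩
    rw [rbvNorm]
    exact csInf_le ⟨0, fun y hy => hy.1.le⟩ ⟨hε, hN i hi⟩
  refine ⟨g, ?_, hga, ?_⟩
  · -- g ∈ RBV
    obtain ⟨N, hN⟩ := hconv 1 one_pos
    have h1 : rieszVar φ a b (fun x => 1 * (g x - F N x)) ≤ 1 := by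
      refine le_trans (rieszVar_mono hφ fun x y => ?_) (hN N le_rfl)
      apply le_of_eq
      have heq : (F N y - g y) / 1 - (F N x - g x) / 1 =
          -((1 * (g y - F N y)) - (1 * (g x - F N x))) := by ring
      rw [heq, abs_neg]
    have h2 : MemRBV φ a b (fun x => g x - F N x) := memRBV_of_bounded hφ one_pos h1
    have h3 := memRBV_add hφ (hF N).1 h2
    have heq : (fun x => F N x + (g x - F N x)) = g := by funext x; ring
    rwa [heq] at h3
  · -- convergence in the quasi-norm
    rw [Metric.tendsto_atTop]
    intro ε hε
    obtain ⟨N, hN⟩ := hnorm_le (ε / 2) (half_pos hε)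
    refine ⟨N, fun i hi => ?_⟩
    have hnn : 0 ≤ rbvNorm φ a b (fun x => F i x - g x) := by
      rw [rbvNorm]
      exact Real.sInf_nonneg fun y hy => hy.1.le
    rw [Real.dist_eq, sub_zero, abs_of_nonneg hnn]
    exact lt_of_le_of_lt (hN i hi) (half_lt_self hε)
end

section
/- Let I=[a,b]⊂ℝ be a closed nondegenerate interval and φ∈Φ_w(I). Then there exists a constant C>0, depending only on φ and |I|, such that sup_{x∈I} |f(x)| ≤ C ‖f‖_{RBV^φ(I)} for every f∈RBV_0^φ(I). -/
open MeasureTheory Filter Set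
open scoped ENNReal

lemma key_le_rieszVar (φ : ℝ → ℝ → ℝ≥0∞) {a b x : ℝ} (hax : a < x) (hxb : x ≤ b)
    (g : ℝ → ℝ) :
    phiSup φ (Set.Icc a x) (|g x - g a| / (x - a)) * ENNReal.ofReal (x - a)
      ≤ rieszVar φ a b g := by
  rcases eq_or_lt_of_le hxb with rfl | hxb'
  · refine le_trans ?_ (le_iSup _ (⟨1, one_pos, fun i => if i = 0 then a else x, rfl, rfl,
      by intro i hi; interval_cases i; simpa using hax⟩ : IntervalPartition a x))
    simp [vSum, phiSup]
  · refine le_trans ?_ (le_iSup _ (⟨2, two_pos,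
      fun i => if i = 0 then a else if i = 1 then x else b, rfl, rfl, ?_⟩ :
      IntervalPartition a b))
    · rw [vSum]
      rw [Finset.sum_range_succ, Finset.sum_range_one]
      refine le_trans ?_ le_self_add
      simp [phiSup]
    · intro i hi
      interval_cases i
      · simpa using hax
      · simpa using hxb'

/-- The sup-norm estimate from the proof of Theorem 4.4: there is `C > 0`, depending only on
`φ` and `|I|`, with `sup_I |f| ≤ C ‖f‖_{RBV^φ(I)}` for every `f ∈ RBV_0^φ(I)`. -/
theorem rbv_zero_sup_bound (a b : ℝ) (hab : a < b)
    (φ : ℝ → ℝ → ℝ≥0∞) (hφ : IsPhiW φ (Set.Icc a b)) :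
    ∃ C : ℝ, 0 < C ∧ ∀ f : ℝ → ℝ, MemRBV φ a b f → f a = 0 →
      ∀ x ∈ Set.Icc a b, |f x| ≤ C * rbvNorm φ a b f := by
  obtain ⟨L, hL1, hL⟩ := hφ.aInc1
  have ha : a ∈ Set.Icc a b := ⟨le_rfl, hab.le⟩
  have h1 : ∀ᶠ t in atTop, (1 : ℝ≥0∞) < φ a t :=
    (hφ.tendsto_top a ha).eventually (eventually_gt_nhds (by simp))
  obtain ⟨s₀, hs₀⟩ := eventually_atTop.mp h1
  set s₁ : ℝ := max s₀ 1 with hs₁def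
  have hs₁1 : (1 : ℝ) ≤ s₁ := le_max_right _ _
  have hs₁pos : 0 < s₁ := lt_of_lt_of_le one_pos hs₁1
  have hφs₁ : (1 : ℝ≥0∞) ≤ φ a s₁ := (hs₀ s₁ (le_max_left _ _)).le
  set C : ℝ := s₁ * L + s₁ * (b - a) with hCdef
  have hCpos : 0 < C := by nlinarith
  refine ⟨C, hCpos, ?_⟩
  intro f hf hfa x hx
  -- the admissible set for the norm
  set S : Set ℝ := {lam : ℝ | 0 < lam ∧ rieszVar φ a b (fun y => f y / lam) ≤ 1} with hSdef
  have hSne : S.Nonempty := by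
    have h2 : ∀ᶠ lam in nhdsWithin (0 : ℝ) (Set.Ioi 0),
        rieszVar φ a b (fun y => lam * f y) ≤ 1 := by
      filter_upwards [hf.eventually (eventually_le_nhds (by simp : (0 : ℝ≥0∞) < 1))] with
        lam h using h
    obtain ⟨lam₀, hlam₀, hlam₀pos⟩ :=
      (h2.and (eventually_mem_nhdsWithin (s := Set.Ioi (0 : ℝ)))).exists
    have hlam₀pos' : 0 < lam₀ := hlam₀pos
    refine ⟨1 / lam₀, by positivity, ?_⟩
    have : (fun y => f y / (1 / lam₀)) = fun y => lam₀ * f y := by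
      funext y; field_simp
    rw [this]; exact hlam₀
  -- main estimate for each admissible lam
  have hmain : ∀ lam ∈ S, |f x| ≤ C * lam := by
    rintro lam ⟨hlam, hvar⟩
    rcases eq_or_lt_of_le hx.1 with rfl | hax
    · rw [hfa, abs_zero]; positivity
    set g : ℝ → ℝ := fun y => f y / lam with hgdef
    have hxa : 0 < x - a := sub_pos.mpr hax
    have hga : g a = 0 := by simp [hgdef, hfa]
    have hkey := (key_le_rieszVar φ hax hx.2 g).trans hvar
    set t₀ : ℝ := |f x| / lam / (x - a) with ht₀def
    have hgval : |g x - g a| / (x - a) = t₀ := by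
      rw [hga, sub_zero, hgdef]; simp [ht₀def, abs_div, abs_of_pos hlam]
    rw [hgval] at hkey
    have haIcc : a ∈ Set.Icc a x := ⟨le_rfl, hax.le⟩
    have hφa : φ a t₀ * ENNReal.ofReal (x - a) ≤ 1 := by
      refine le_trans (mul_le_mul_left ?_ _) hkey
      exact le_biSup (fun y => φ y t₀) haIcc
    rcases eq_or_lt_of_le (abs_nonneg (f x)) with hfx0 | hfxpos
    · rw [← hfx0]; positivity
    have ht₀pos : 0 < t₀ := by positivity
    rcases lt_or_ge t₀ s₁ with hts | hst
    · -- small case: |f x| = t₀ * (x - a) * lam ≤ s₁ * (b - a) * lam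
      have hfxeq : |f x| = t₀ * (x - a) * lam := by
        rw [ht₀def]; field_simp [ht₀def]
      rw [hfxeq]
      have h1 : t₀ * (x - a) * lam ≤ s₁ * (b - a) * lam := by
        have hxb : x - a ≤ b - a := by linarith [hx.2]
        have h2 : t₀ * (x - a) ≤ s₁ * (b - a) :=
          mul_le_mul hts.le hxb hxa.le hs₁pos.le
        nlinarith [hlam.le]
      refine h1.trans ?_
      have : s₁ * (b - a) ≤ C := by nlinarith
      nlinarith
    · -- large case: use (aInc)₁
      have hinc := hL a ha s₁ t₀ hs₁pos hst
      have hwne : ENNReal.ofReal (x - a) ≠ 0 := by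
        simp [ENNReal.ofReal_eq_zero]; linarith
      have hvne : ENNReal.ofReal t₀ ≠ 0 := by
        simp [ENNReal.ofReal_eq_zero]; linarith
      have hune : ENNReal.ofReal s₁ ≠ 0 := by
        simp [ENNReal.ofReal_eq_zero]; linarith
      have hchain : 1 / ENNReal.ofReal s₁ ≤
          ENNReal.ofReal L / ENNReal.ofReal (|f x| / lam) := by
        have h0 : 1 / ENNReal.ofReal s₁ ≤ φ a s₁ / ENNReal.ofReal s₁ :=
          ENNReal.div_le_div_right hφs₁ _
        refine h0.trans (hinc.trans ?_)
        have hBle : φ a t₀ ≤ 1 / ENNReal.ofReal (x - a) :=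
          (ENNReal.le_div_iff_mul_le (Or.inl hwne) (Or.inl ENNReal.ofReal_ne_top)).mpr hφa
        have hM : ENNReal.ofReal (x - a) * ENNReal.ofReal t₀ =
            ENNReal.ofReal (|f x| / lam) := by
          rw [← ENNReal.ofReal_mul hxa.le]
          congr 1
          rw [ht₀def]; field_simp [ht₀def]
        calc ENNReal.ofReal L * (φ a t₀ / ENNReal.ofReal t₀)
            ≤ ENNReal.ofReal L * ((1 / ENNReal.ofReal (x - a)) / ENNReal.ofReal t₀) := by
              gcongr
          _ = ENNReal.ofReal L / ENNReal.ofReal (|f x| / lam) := by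
              rw [one_div, div_eq_mul_inv,
                ← ENNReal.mul_inv (Or.inl hwne) (Or.inr hvne), ← div_eq_mul_inv, hM]
      have hMne : ENNReal.ofReal (|f x| / lam) ≠ 0 := by
        simp [ENNReal.ofReal_eq_zero]
        positivity
      have h2 : (1 / ENNReal.ofReal s₁) * ENNReal.ofReal (|f x| / lam)
          ≤ ENNReal.ofReal L :=
        (ENNReal.le_div_iff_mul_le (Or.inl hMne) (Or.inl ENNReal.ofReal_ne_top)).mp hchain
      have h3 : ENNReal.ofReal (|f x| / lam) / ENNReal.ofReal s₁ ≤ ENNReal.ofReal L := by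
        rw [div_eq_mul_inv, mul_comm, ← one_div, ← mul_assoc] at *
        simpa [mul_comm, div_eq_mul_inv, one_div] using h2
      have h4 : ENNReal.ofReal (|f x| / lam) ≤ ENNReal.ofReal (L * s₁) := by
        rw [ENNReal.ofReal_mul (by linarith : (0:ℝ) ≤ L)]
        exact (ENNReal.div_le_iff_le_mul (Or.inl hune) (Or.inl ENNReal.ofReal_ne_top)).mp h3
      have h5 : |f x| / lam ≤ L * s₁ :=
        (ENNReal.ofReal_le_ofReal_iff (by positivity)).mp h4
      rw [div_le_iff₀ hlam] at h5
      have hLC : L * s₁ ≤ C := by nlinarith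
      nlinarith
  have hfin : |f x| / C ≤ sInf S := by
    refine le_csInf hSne ?_
    intro lam hlam
    rw [div_le_iff₀ hCpos]
    have := hmain lam hlam
    linarith [mul_comm C lam]
  have hnorm : rbvNorm φ a b f = sInf S := rfl
  rw [hnorm, ← div_le_iff₀' hCpos]
  exact hfin
end

section
/- Let I=[a,b]⊂ℝ be a closed nondegenerate interval and let φ∈Φ_c be independent of x. Then for every f:I→ℝ, the Riesz φ-variation and its limsup version coincide: V^φ_I(f) = V̄^φ_I(f). -/
open MeasureTheory Filter Set
open scoped ENNReal

-- ACTUAL AUX START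
lemma jensen_avg (φ : ℝ → ℝ≥0∞) (hφ : IsPhiC φ) (m : ℕ) (g : ℕ → ℝ)
    (hg : ∀ j, 0 ≤ g j) :
    (m : ℝ≥0∞) * φ ((∑ j ∈ Finset.range m, g j) / m) ≤
      ∑ j ∈ Finset.range m, φ (g j) := by
  induction m with
  | zero => simp
  | succ m ih =>
    rcases Nat.eq_zero_or_pos m with hm | hm
    · subst hm; simp
    have hmR : (0:ℝ) < m := Nat.cast_pos.mpr hm
    have hm1 : (0:ℝ) < (m:ℝ) + 1 := by positivity
    have hS : 0 ≤ ∑ j ∈ Finset.range m, g j := Finset.sum_nonneg fun j _ => hg j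
    have hs : (0:ℝ) ≤ (∑ j ∈ Finset.range m, g j) / m := by positivity
    have hθ0 : (0:ℝ) ≤ (m:ℝ) / ((m:ℝ) + 1) := by positivity
    have hθ1 : (m:ℝ) / ((m:ℝ) + 1) ≤ 1 := by
      rw [div_le_one hm1]; linarith
    have key := hφ.convex ((∑ j ∈ Finset.range m, g j) / m) (g m)
      ((m:ℝ) / ((m:ℝ) + 1)) hs (hg m) hθ0 hθ1
    have harg : (m:ℝ) / ((m:ℝ) + 1) * ((∑ j ∈ Finset.range m, g j) / m)
        + (1 - (m:ℝ) / ((m:ℝ) + 1)) * g m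
        = (∑ j ∈ Finset.range (m+1), g j) / ((m:ℝ) + 1) := by
      rw [Finset.sum_range_succ]
      field_simp
      ring
    rw [harg] at key
    have hcast : ((m+1 : ℕ) : ℝ≥0∞) = ENNReal.ofReal ((m:ℝ) + 1) := by
      rw [ENNReal.ofReal_add (by positivity) zero_le_one]
      simp
    have hmul1 : ((m+1 : ℕ) : ℝ≥0∞) * ENNReal.ofReal ((m:ℝ) / ((m:ℝ) + 1))
        = (m : ℝ≥0∞) := by
      rw [hcast, ← ENNReal.ofReal_mul (by positivity)]
      rw [mul_div_cancel₀ _ hm1.ne']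
      simp
    have hmul2 : ((m+1 : ℕ) : ℝ≥0∞) * ENNReal.ofReal (1 - (m:ℝ) / ((m:ℝ) + 1))
        = 1 := by
      rw [hcast, ← ENNReal.ofReal_mul (by positivity)]
      rw [show ((m:ℝ)+1) * (1 - (m:ℝ)/((m:ℝ)+1)) = 1 by field_simp; ring]
      simp
    calc ((m+1 : ℕ) : ℝ≥0∞) * φ ((∑ j ∈ Finset.range (m+1), g j) / ((m+1:ℕ):ℝ))
        ≤ ((m+1 : ℕ) : ℝ≥0∞) *
            (ENNReal.ofReal ((m:ℝ)/((m:ℝ)+1)) * φ ((∑ j ∈ Finset.range m, g j) / m)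
              + ENNReal.ofReal (1 - (m:ℝ)/((m:ℝ)+1)) * φ (g m)) := by
          apply mul_le_mul_right
          convert key using 3
          push_cast
          ring
      _ = (m : ℝ≥0∞) * φ ((∑ j ∈ Finset.range m, g j) / m) + φ (g m) := by
          rw [mul_add, ← mul_assoc, ← mul_assoc, hmul1, hmul2, one_mul]
      _ ≤ (∑ j ∈ Finset.range m, φ (g j)) + φ (g m) := by
          exact add_le_add ih le_rfl
      _ = ∑ j ∈ Finset.range (m+1), φ (g j) := (Finset.sum_range_succ _ _).symm

lemma sum_range_mul_group {M : Type*} [AddCommMonoid M] (F : ℕ → M) (n m : ℕ) :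
    ∑ i ∈ Finset.range (n * m), F i
      = ∑ k ∈ Finset.range n, ∑ j ∈ Finset.range m, F (m * k + j) := by
  induction n with
  | zero => simp
  | succ n ih =>
    rw [Nat.succ_mul, Finset.sum_range_succ, ← ih, Finset.sum_range_add]
    exact congrArg _ (Finset.sum_congr rfl fun j _ => by rw [mul_comm])

lemma refineAux_step {a b : ℝ} (P : IntervalPartition a b) (m : ℕ) (hm : 0 < m)
    (i : ℕ) :
    (P.x ((i+1) / m) + (((i+1) % m : ℕ) : ℝ) * (P.x ((i+1) / m + 1) - P.x ((i+1) / m)) / m)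
      - (P.x (i / m) + ((i % m : ℕ) : ℝ) * (P.x (i / m + 1) - P.x (i / m)) / m)
      = (P.x (i / m + 1) - P.x (i / m)) / m := by
  have hmR : (0:ℝ) < m := Nat.cast_pos.mpr hm
  obtain ⟨q, r, hr, rfl⟩ : ∃ q r, r < m ∧ i = m * q + r :=
    ⟨i / m, i % m, Nat.mod_lt _ hm, (Nat.div_add_mod i m).symm⟩
  have hdiv : (m * q + r) / m = q := by
    rw [Nat.mul_add_div hm, Nat.div_eq_of_lt hr, Nat.add_zero]
  have hmod : (m * q + r) % m = r := by
    rw [Nat.mul_add_mod, Nat.mod_eq_of_lt hr]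
  rcases Nat.lt_or_ge (r+1) m with h1 | h1
  · have hdiv' : (m * q + r + 1) / m = q := by
      rw [Nat.add_assoc, Nat.mul_add_div hm, Nat.div_eq_of_lt h1, Nat.add_zero]
    have hmod' : (m * q + r + 1) % m = r + 1 := by
      rw [Nat.add_assoc, Nat.mul_add_mod, Nat.mod_eq_of_lt h1]
    rw [hdiv', hmod', hdiv, hmod]
    push_cast
    ring
  · have hrm : r + 1 = m := le_antisymm (Nat.succ_le_of_lt hr) h1
    have hdiv' : (m * q + r + 1) / m = q + 1 := by
      rw [Nat.add_assoc, hrm, show m * q + m = m * (q+1) by ring,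
        Nat.mul_div_cancel_left _ hm]
    have hmod' : (m * q + r + 1) % m = 0 := by
      rw [Nat.add_assoc, hrm, show m * q + m = m * (q+1) by ring, Nat.mul_mod_right]
    rw [hdiv', hmod', hdiv, hmod]
    have hrR : (r:ℝ) = (m:ℝ) - 1 := by
      have h2 : ((r:ℕ):ℝ) + 1 = m := by exact_mod_cast congrArg (Nat.cast : ℕ → ℝ) hrm
      linarith
    rw [hrR]
    field_simp
    ring

/-- Refinement of a partition: split each subinterval into `m` equal pieces. -/
noncomputable def IntervalPartition.refine {a b : ℝ} (P : IntervalPartition a b)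
    (m : ℕ) (hm : 0 < m) : IntervalPartition a b where
  n := P.n * m
  npos := Nat.mul_pos P.npos hm
  x := fun i => P.x (i / m) + ((i % m : ℕ) : ℝ) * (P.x (i / m + 1) - P.x (i / m)) / m
  left := by simp [Nat.zero_div, P.left]
  right := by
    simp only [Nat.mul_div_cancel _ hm, Nat.mul_mod_left, Nat.cast_zero, zero_mul,
      zero_div, add_zero, P.right]
  strict := by
    intro i hi
    have hstep := refineAux_step P m hm i
    have hk : i / m < P.n := (Nat.div_lt_iff_lt_mul hm).mpr hi
    have hpos : 0 < P.x (i / m + 1) - P.x (i / m) := sub_pos.mpr (P.strict _ hk)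
    have : (0:ℝ) < (P.x (i / m + 1) - P.x (i / m)) / m := by positivity
    beta_reduce
    linarith [hstep]

lemma refine_step {a b : ℝ} (P : IntervalPartition a b) (m : ℕ) (hm : 0 < m)
    (i : ℕ) :
    (P.refine m hm).x (i+1) - (P.refine m hm).x i
      = (P.x (i / m + 1) - P.x (i / m)) / m :=
  refineAux_step P m hm i

lemma refine_val {a b : ℝ} (P : IntervalPartition a b) (m : ℕ) (hm : 0 < m)
    (k j : ℕ) (hj : j ≤ m) :
    (P.refine m hm).x (m * k + j)
      = P.x k + (j : ℝ) * (P.x (k + 1) - P.x k) / m := by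
  have hmR : (0:ℝ) < m := Nat.cast_pos.mpr hm
  rcases Nat.lt_or_ge j m with h | h
  · have hdiv : (m * k + j) / m = k := by
      rw [Nat.mul_add_div hm, Nat.div_eq_of_lt h, Nat.add_zero]
    have hmod : (m * k + j) % m = j := by
      rw [Nat.mul_add_mod, Nat.mod_eq_of_lt h]
    show P.x _ + _ = _
    rw [hdiv, hmod]
  · have hjm : j = m := le_antisymm hj h
    have hdiv : (m * k + j) / m = k + 1 := by
      rw [hjm, show m * k + m = m * (k+1) by ring, Nat.mul_div_cancel_left _ hm]
    have hmod : (m * k + j) % m = 0 := by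
      rw [hjm, show m * k + m = m * (k+1) by ring, Nat.mul_mod_right]
    show P.x _ + _ = _
    rw [hdiv, hmod, hjm]
    push_cast
    field_simp
    ring

lemma refine_mesh {a b : ℝ} (P : IntervalPartition a b) (m : ℕ) (hm : 0 < m) :
    (P.refine m hm).mesh ≤ P.mesh / m := by
  have hmR : (0:ℝ) < m := Nat.cast_pos.mpr hm
  apply Finset.sup'_le
  intro i hi
  have hi' : i < P.n * m := Finset.mem_range.mp hi
  have : (P.refine m hm).x (i+1) - (P.refine m hm).x i
      = (P.x (i / m + 1) - P.x (i / m)) / m := refine_step P m hm i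
  rw [this]
  have hle : P.x (i / m + 1) - P.x (i / m) ≤ P.mesh :=
    Finset.le_sup' (fun k => P.x (k + 1) - P.x k)
      (Finset.mem_range.mpr ((Nat.div_lt_iff_lt_mul hm).mpr hi'))
  gcongr

lemma mesh_pos {a b : ℝ} (P : IntervalPartition a b) : 0 < P.mesh :=
  lt_of_lt_of_le (sub_pos.mpr (P.strict 0 P.npos))
    (Finset.le_sup' (fun k => P.x (k + 1) - P.x k) (Finset.mem_range.mpr P.npos))

lemma interval_jensen (φ : ℝ → ℝ≥0∞) (hφ : IsPhiC φ) (f : ℝ → ℝ) (c h : ℝ)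
    (hh : 0 < h) (m : ℕ) (hm : 0 < m) :
    φ (|f (c + h) - f c| / h) * ENNReal.ofReal h ≤
      ∑ j ∈ Finset.range m,
        φ (|f (c + ((j:ℝ)+1) * h / m) - f (c + (j:ℝ) * h / m)| / (h / m)) *
          ENNReal.ofReal (h / m) := by
  have hmR : (0:ℝ) < m := Nat.cast_pos.mpr hm
  set g : ℕ → ℝ := fun j => |f (c + ((j:ℝ)+1) * h / m) - f (c + (j:ℝ) * h / m)| / (h / m)
    with hg_def
  have hg : ∀ j, 0 ≤ g j := fun j => div_nonneg (abs_nonneg _) (by positivity)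
  have htel : f (c + h) - f c
      = ∑ j ∈ Finset.range m, (f (c + ((j:ℝ)+1) * h / m) - f (c + (j:ℝ) * h / m)) := by
    have t1 := Finset.sum_range_sub (fun j : ℕ => f (c + (j:ℝ) * h / m)) m
    push_cast at t1
    rw [show c + (m:ℝ) * h / m = c + h by field_simp,
      show c + (0:ℝ) * h / m = c by ring_nf] at t1
    exact t1.symm
  have habs : |f (c + h) - f c| ≤ (h / m) * ∑ j ∈ Finset.range m, g j := by
    rw [htel, Finset.mul_sum]
    refine (Finset.abs_sum_le_sum_abs _ _).trans (Finset.sum_le_sum fun j _ => ?_)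
    have heq : h / (m:ℝ) * g j = |f (c + ((j:ℝ)+1) * h / m) - f (c + (j:ℝ) * h / m)| := by
      rw [hg_def]
      field_simp
    rw [heq]
  have harg : |f (c + h) - f c| / h ≤ (∑ j ∈ Finset.range m, g j) / m := by
    rw [div_le_div_iff₀ hh hmR]
    calc |f (c + h) - f c| * m ≤ ((h / m) * ∑ j ∈ Finset.range m, g j) * m :=
          mul_le_mul_of_nonneg_right habs hmR.le
      _ = (∑ j ∈ Finset.range m, g j) * h := by field_simp
  have hmono : φ (|f (c + h) - f c| / h) ≤ φ ((∑ j ∈ Finset.range m, g j) / m) :=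
    hφ.mono (Set.mem_Ici.mpr (by positivity))
      (Set.mem_Ici.mpr (div_nonneg (Finset.sum_nonneg fun j _ => hg j) hmR.le)) harg
  have hjen := jensen_avg φ hφ m g hg
  have hofh : ENNReal.ofReal h = (m : ℝ≥0∞) * ENNReal.ofReal (h / m) := by
    rw [show (m : ℝ≥0∞) = ENNReal.ofReal (m : ℝ) by simp,
      ← ENNReal.ofReal_mul hmR.le]
    congr 1
    field_simp
  calc φ (|f (c + h) - f c| / h) * ENNReal.ofReal h
      ≤ φ ((∑ j ∈ Finset.range m, g j) / m) * ENNReal.ofReal h :=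
        mul_le_mul_left hmono _
    _ = ((m : ℝ≥0∞) * φ ((∑ j ∈ Finset.range m, g j) / m)) * ENNReal.ofReal (h / m) := by
        rw [hofh]; ring
    _ ≤ (∑ j ∈ Finset.range m, φ (g j)) * ENNReal.ofReal (h / m) :=
        mul_le_mul_left hjen _
    _ = ∑ j ∈ Finset.range m, φ (g j) * ENNReal.ofReal (h / m) := Finset.sum_mul _ _ _

lemma vSumC_le_refine (φ : ℝ → ℝ≥0∞) (hφ : IsPhiC φ) {a b : ℝ} (f : ℝ → ℝ)
    (P : IntervalPartition a b) (m : ℕ) (hm : 0 < m) :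
    vSumC φ f P ≤ vSumC φ f (P.refine m hm) := by
  unfold vSumC
  rw [show (P.refine m hm).n = P.n * m from rfl, sum_range_mul_group]
  apply Finset.sum_le_sum
  intro k hk
  have hk' : k < P.n := Finset.mem_range.mp hk
  set c : ℝ := P.x k with hc_def
  set h : ℝ := P.x (k+1) - P.x k with hh_def
  have hh : 0 < h := sub_pos.mpr (P.strict k hk')
  have hx : ∀ j ≤ m, (P.refine m hm).x (m*k+j) = c + (j:ℝ)*h/m :=
    fun j hj => refine_val P m hm k j hj
  have hA : ∀ j < m, (P.refine m hm).x (m*k+j+1) = c + ((j:ℝ)+1)*h/m := by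
    intro j hj
    rw [show m*k+j+1 = m*k+(j+1) by omega, hx (j+1) hj]
    push_cast
    ring
  have hxk1 : P.x (k+1) = c + h := by rw [hc_def, hh_def]; ring
  calc φ (|f (P.x (k + 1)) - f (P.x k)| / (P.x (k + 1) - P.x k)) *
        ENNReal.ofReal (P.x (k + 1) - P.x k)
      = φ (|f (c + h) - f c| / h) * ENNReal.ofReal h := by rw [hxk1, show c + h - c = h by ring]
    _ ≤ ∑ j ∈ Finset.range m,
          φ (|f (c + ((j:ℝ)+1) * h / m) - f (c + (j:ℝ) * h / m)| / (h / m)) *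
            ENNReal.ofReal (h / m) := interval_jensen φ hφ f c h hh m hm
    _ = ∑ j ∈ Finset.range m,
          φ (|f ((P.refine m hm).x (m*k+j+1)) - f ((P.refine m hm).x (m*k+j))| /
              ((P.refine m hm).x (m*k+j+1) - (P.refine m hm).x (m*k+j))) *
            ENNReal.ofReal ((P.refine m hm).x (m*k+j+1) - (P.refine m hm).x (m*k+j)) := by
        refine Finset.sum_congr rfl fun j hj => ?_
        have hj' : j < m := Finset.mem_range.mp hj
        have h1 := hA j hj'
        have h2 := hx j hj'.le
        have hD : (P.refine m hm).x (m*k+j+1) - (P.refine m hm).x (m*k+j) = h / m := by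
          rw [h1, h2]; ring
        rw [hD, h1, h2]


/-- Lemma 5.1.  For `φ ∈ Φ_c` independent of `x`, the Riesz variation and its limsup
version coincide: `V^φ_I(f) = V̄^φ_I(f)`. -/
theorem riesz_variation_eq_upper_of_const (a b : ℝ) (hab : a < b)
    (φ : ℝ → ℝ≥0∞) (hφ : IsPhiC φ) :
    ∀ f : ℝ → ℝ, rieszVarC φ a b f = rieszVarUpperC φ a b f := by
  intro f
  apply le_antisymm
  · refine iSup_le fun P => le_iInf fun δ => le_iInf fun hδ => ?_
    obtain ⟨m, hm⟩ := exists_nat_gt (P.mesh / δ)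
    have hm0 : 0 < m := by
      have h0 : (0:ℝ) < P.mesh / δ := div_pos (mesh_pos P) hδ
      exact_mod_cast Nat.cast_pos.mp (h0.trans hm)
    have hmR : (0:ℝ) < m := Nat.cast_pos.mpr hm0
    have hmesh : (P.refine m hm0).mesh < δ := by
      refine lt_of_le_of_lt (refine_mesh P m hm0) ?_
      rw [div_lt_iff₀ hmR]
      rw [div_lt_iff₀ hδ] at hm
      linarith [hm, mul_comm δ (m:ℝ)]
    exact (vSumC_le_refine φ hφ f P m hm0).trans
      (le_iSup₂ (f := fun (Q : IntervalPartition a b) (_ : Q.mesh < δ) => vSumC φ f Q)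
        (P.refine m hm0) hmesh)
  · exact (iInf₂_le 1 one_pos).trans
      (iSup₂_le fun P _ => le_iSup (fun Q : IntervalPartition a b => vSumC φ f Q) P)
end
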